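/- arXiv:2307.05897 — 2 statements merged into one kernel-verified Lean document; each statement's English description precedes it below -/
import Mathlib

section
/- Let t be a positive integer, D a digraph, and Z₁, Z₂ ⊆ A(D). If μ(D,Z₁,Z₂) ≥ 2t, then D contains t pairwise vertex-disjoint (Z₁,Z₂)-unbalanced directed cycles. -/
variable {V : Type}

/-- The arcs of a directed cycle given by its (cyclic) vertex list. -/
def cycleArcs (vs : List V) : List (V × V) := vs.zip (vs.rotate 1)

/-- The arcs of a directed path given by its vertex list. -/
def pathArcs (vs : List V) : List (V × V) := vs.zip vs.tail

/-- `vs` is the vertex list of a directed cycle in the digraph `D`. -/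
def IsDicycle (D : V → V → Prop) (vs : List V) : Prop :=
  vs ≠ [] ∧ vs.Nodup ∧ ∀ p ∈ cycleArcs vs, D p.1 p.2

/-- The number of (distinct) arcs of `l` that lie in `Z`. -/
noncomputable def arcCount (l : List (V × V)) (Z : Set (V × V)) : ℕ :=
  Nat.card {a : V × V // a ∈ l ∧ a ∈ Z}

/-- The directed cycle `vs` is `(Z1, Z2)`-unbalanced. -/
def Unbalanced (Z1 Z2 : Set (V × V)) (vs : List V) : Prop :=
  arcCount (cycleArcs vs) Z1 ≠ arcCount (cycleArcs vs) Z2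

/-- The induced subdigraph `D[S]` contains no `(Z1,Z2)`-unbalanced directed cycle. -/
def NoUnbCycle (D : V → V → Prop) (Z1 Z2 : Set (V × V)) (S : Set V) : Prop :=
  ∀ vs : List V, IsDicycle D vs → (∀ v ∈ vs, v ∈ S) → ¬ Unbalanced Z1 Z2 vs

/-- `mu D Z1 Z2 S` is the `(Z1,Z2)`-unbalanced dichromatic number of the induced
subdigraph `D[S]`: the least number of parts of a partition of `S` each of whose
parts induces no `(Z1,Z2)`-unbalanced directed cycle. -/
noncomputable def mu (D : V → V → Prop) (Z1 Z2 : Set (V × V)) (S : Set V) : ℕ :=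
  sInf {k | ∃ c : V → Fin k, ∀ i : Fin k, NoUnbCycle D Z1 Z2 (S ∩ {v | c v = i})}

/-- The adjacency relation of the induced subdigraph `D[S]`. -/
def inducedRel (D : V → V → Prop) (S : Set V) : V → V → Prop :=
  fun u v => D u v ∧ u ∈ S ∧ v ∈ S

/-- The induced subdigraph `D[S]` is strongly connected. -/
def StronglyConnectedOn (D : V → V → Prop) (S : Set V) : Prop :=
  ∀ u ∈ S, ∀ v ∈ S, Relation.ReflTransGen (inducedRel D S) u v

/-- `H` is (the vertex set of) a strong component of the induced subdigraph `D[S]`. -/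
def IsStrongComponent (D : V → V → Prop) (S H : Set V) : Prop :=
  H ⊆ S ∧ H.Nonempty ∧ StronglyConnectedOn D H ∧
    ∀ H', H ⊆ H' → H' ⊆ S → StronglyConnectedOn D H' → H' = H

/-- `vs` is the vertex list of a directed path in `D`. -/
def IsDipath (D : V → V → Prop) (vs : List V) : Prop :=
  vs.Nodup ∧ vs.Chain' D

/-- `vs` is a directed path in `D` from `x` to `y`. -/
def IsDipathFromTo (D : V → V → Prop) (vs : List V) (x y : V) : Prop :=
  IsDipath D vs ∧ vs.head? = some x ∧ vs.getLast? = some y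

/-- The internal vertices of a path given by its vertex list. -/
def internalVerts (vs : List V) : List V := vs.tail.dropLast

/-- `vs` is a directed `X`-path in `D` from `x` to `y`: a directed path whose two
endpoints are distinct vertices of `X` and whose internal vertices avoid `X`. -/
def IsXPath (D : V → V → Prop) (X : Set V) (vs : List V) (x y : V) : Prop :=
  IsDipathFromTo D vs x y ∧ x ∈ X ∧ y ∈ X ∧ x ≠ y ∧ ∀ v ∈ internalVerts vs, v ∉ X
def UnbCycIn (D : V → V → Prop) (Z1 Z2 : Set (V × V)) (S : Set V) (vs : List V) : Prop :=
  IsDicycle D vs ∧ Unbalanced Z1 Z2 vs ∧ ∀ v ∈ vs, v ∈ S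

def muSet (D : V → V → Prop) (Z1 Z2 : Set (V × V)) (S : Set V) : Set ℕ :=
  {k | ∃ c : V → Fin k, ∀ i : Fin k, NoUnbCycle D Z1 Z2 (S ∩ {v | c v = i})}

lemma mu_def (D : V → V → Prop) (Z1 Z2 : Set (V × V)) (S : Set V) :
    mu D Z1 Z2 S = sInf (muSet D Z1 Z2 S) := rfl

lemma cycleArcs_singleton (v : V) : cycleArcs [v] = [(v, v)] := by
  simp [cycleArcs, List.rotate_singleton]

lemma isDicycle_singleton {D : V → V → Prop} {v : V} (h : D v v) : IsDicycle D [v] := by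
  refine ⟨by simp, by simp, ?_⟩
  intro p hp
  rw [cycleArcs_singleton] at hp
  simp at hp
  subst hp
  exact h

lemma loop_of_dicycle {D : V → V → Prop} {v : V} (h : IsDicycle D [v]) : D v v := by
  have := h.2.2 (v, v) (by rw [cycleArcs_singleton]; simp)
  exact this

lemma eq_singleton_of_all_eq {vs : List V} (hne : vs ≠ []) (hnd : vs.Nodup) {v : V}
    (h : ∀ u ∈ vs, u = v) : vs = [v] := by
  match vs, hne with
  | [a], _ => simp [h a (by simp)]
  | a :: b :: l, _ =>
    have ha := h a (by simp)
    have hb := h b (by simp)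
    rw [List.nodup_cons] at hnd
    exact absurd (ha.trans hb.symm) (by intro e; exact hnd.1 (e ▸ (List.mem_cons_self : b ∈ b :: l)))

/-- If there is an unbalanced loop in `S` then no coloring works at all. -/
lemma mu_eq_zero_of_loop {D : V → V → Prop} {Z1 Z2 : Set (V × V)} {S : Set V} {v : V}
    (hv : v ∈ S) (hD : D v v) (hu : Unbalanced Z1 Z2 [v]) : mu D Z1 Z2 S = 0 := by
  rw [mu_def]
  convert Nat.sInf_empty
  rw [Set.eq_empty_iff_forall_notMem]
  rintro k ⟨c, hc⟩
  refine hc (c v) [v] (isDicycle_singleton hD) ?_ hu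
  intro u hu'
  simp only [List.mem_singleton] at hu'
  subst hu'
  exact ⟨hv, rfl⟩

/-- If no unbalanced loops in `S`, the coloring set is nonempty. -/
lemma muSet_nonempty [Fintype V] {D : V → V → Prop} {Z1 Z2 : Set (V × V)} {S : Set V}
    (h : ∀ v ∈ S, D v v → ¬ Unbalanced Z1 Z2 [v]) :
    (Fintype.card V) ∈ muSet D Z1 Z2 S := by
  refine ⟨Fintype.equivFin V, ?_⟩
  intro i vs hcyc hsub hunb
  have hall : ∀ u ∈ vs, u = (Fintype.equivFin V).symm i := by
    intro u hu
    have := (hsub u hu).2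
    simp only [Set.mem_setOf_eq] at this
    rw [← this]; simp
  have hvs := eq_singleton_of_all_eq hcyc.1 hcyc.2.1 hall
  set w := (Fintype.equivFin V).symm i
  rw [hvs] at hcyc hunb hsub
  exact h w (hsub w (by simp)).1 (loop_of_dicycle hcyc) hunb

lemma exists_unb_cycle {D : V → V → Prop} {Z1 Z2 : Set (V × V)} {S : Set V}
    (h : 2 ≤ mu D Z1 Z2 S) : ∃ vs, UnbCycIn D Z1 Z2 S vs := by
  by_contra hno
  push_neg at hno
  have h1 : 1 ∈ muSet D Z1 Z2 S := by
    refine ⟨fun _ => 0, ?_⟩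
    intro i vs hcyc hsub hunb
    exact hno vs ⟨hcyc, hunb, fun v hv => (hsub v hv).1⟩
  have := Nat.sInf_le h1
  rw [← mu_def] at this
  omega

lemma no_unb_loop {D : V → V → Prop} {Z1 Z2 : Set (V × V)} {S : Set V}
    (h : 1 ≤ mu D Z1 Z2 S) : ∀ v ∈ S, D v v → ¬ Unbalanced Z1 Z2 [v] := by
  intro v hv hD hu
  rw [mu_eq_zero_of_loop hv hD hu] at h
  omega

lemma exists_min_unb_cycle {D : V → V → Prop} {Z1 Z2 : Set (V × V)} {S : Set V}
    (h : ∃ vs, UnbCycIn D Z1 Z2 S vs) :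
    ∃ vs, UnbCycIn D Z1 Z2 S vs ∧ ∀ ws, UnbCycIn D Z1 Z2 S ws → vs.length ≤ ws.length := by
  obtain ⟨vs0, hvs0⟩ := h
  have hne : {n | ∃ vs, UnbCycIn D Z1 Z2 S vs ∧ vs.length = n}.Nonempty :=
    ⟨vs0.length, vs0, hvs0, rfl⟩
  obtain ⟨vs, hvs, hlen⟩ := Nat.sInf_mem hne
  refine ⟨vs, hvs, ?_⟩
  intro ws hws
  rw [hlen]
  exact Nat.sInf_le ⟨ws, hws, rfl⟩

/-- Key step: removing the vertices of a minimum unbalanced cycle decreases `mu` by ≤ 2. -/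
lemma mu_le_step [Fintype V] {D : V → V → Prop} {Z1 Z2 : Set (V × V)} {S : Set V}
    (hnl : ∀ v ∈ S, D v v → ¬ Unbalanced Z1 Z2 [v])
    {C0 : List V} (hC0 : UnbCycIn D Z1 Z2 S C0)
    (hmin : ∀ ws, UnbCycIn D Z1 Z2 S ws → C0.length ≤ ws.length) :
    mu D Z1 Z2 S ≤ mu D Z1 Z2 (S \ {v | v ∈ C0}) + 2 := by
  set S' := S \ {v | v ∈ C0} with hS'
  set m := mu D Z1 Z2 S' with hm
  have hnl' : ∀ v ∈ S', D v v → ¬ Unbalanced Z1 Z2 [v] := fun v hv => hnl v hv.1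
  have hmem : m ∈ muSet D Z1 Z2 S' := by
    rw [hm, mu_def]
    exact Nat.sInf_mem ⟨Fintype.card V, muSet_nonempty hnl'⟩
  obtain ⟨c', hc'⟩ := hmem
  have hCne : C0 ≠ [] := hC0.1.1
  set v0 := C0.head hCne with hv0
  have hv0mem : v0 ∈ C0 := List.head_mem hCne
  classical
  set c : V → Fin (m + 2) := fun v =>
    if v = v0 then Fin.last (m + 1)
    else if v ∈ C0 then ⟨m, by omega⟩
    else Fin.castLE (by omega) (c' v) with hc
  have hcol : (m + 2) ∈ muSet D Z1 Z2 S := by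
    refine ⟨c, ?_⟩
    intro i vs hcyc hsub hunb
    rcases Nat.lt_or_ge i.val m with hi | hi
    · -- old colors
      have hv' : ∀ v ∈ vs, v ∈ S' ∩ {v | c' v = ⟨i.val, hi⟩} := by
        intro v hv
        obtain ⟨hvS, hvc⟩ := hsub v hv
        simp only [Set.mem_setOf_eq] at hvc
        by_cases h1 : v = v0
        · exfalso; rw [hc] at hvc; simp [h1, Fin.ext_iff, Fin.last] at hvc; omega
        · by_cases h2 : v ∈ C0
          · exfalso; rw [hc] at hvc; simp [h1, h2, Fin.ext_iff] at hvc; omega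
          · refine ⟨⟨hvS, h2⟩, ?_⟩
            rw [hc] at hvc
            simp only [h1, h2, if_false] at hvc
            have : (c' v).val = i.val := by rw [← hvc]; rfl
            simp only [Set.mem_setOf_eq, Fin.ext_iff, this]
      exact hc' ⟨i.val, hi⟩ vs hcyc hv' hunb
    · rcases Nat.lt_or_ge i.val (m + 1) with hi2 | hi2
      · -- color m : vertices in C0 \ {v0}
        have him : i.val = m := by omega
        have hvC : ∀ v ∈ vs, v ∈ C0 ∧ v ≠ v0 := by
          intro v hv
          obtain ⟨hvS, hvc⟩ := hsub v hv
          simp only [Set.mem_setOf_eq] at hvc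
          by_cases h1 : v = v0
          · exfalso; rw [hc] at hvc; simp [h1, Fin.ext_iff, Fin.last] at hvc; omega
          · by_cases h2 : v ∈ C0
            · exact ⟨h2, h1⟩
            · exfalso; rw [hc] at hvc
              simp only [h1, h2, if_false] at hvc
              have : (c' v).val = i.val := by rw [← hvc]; rfl
              have := (c' v).isLt
              omega
        -- vs is an unbalanced cycle in S shorter than C0: contradiction
        have hin : UnbCycIn D Z1 Z2 S vs :=
          ⟨hcyc, hunb, fun v hv => (hsub v hv).1⟩
        have hge := hmin vs hin
        have h1 : vs.toFinset.card = vs.length := List.toFinset_card_of_nodup hcyc.2.1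
        have h2 : C0.toFinset.card = C0.length := List.toFinset_card_of_nodup hC0.1.2.1
        have hsubF : vs.toFinset ⊆ C0.toFinset.erase v0 := by
          intro x hx
          rw [List.mem_toFinset] at hx
          obtain ⟨hx1, hx2⟩ := hvC x hx
          exact Finset.mem_erase.mpr ⟨hx2, List.mem_toFinset.mpr hx1⟩
        have h3 : (C0.toFinset.erase v0).card = C0.toFinset.card - 1 :=
          Finset.card_erase_of_mem (List.mem_toFinset.mpr hv0mem)
        have h4 := Finset.card_le_card hsubF
        have h5 : 1 ≤ C0.length := by
          cases C0 with
          | nil => exact absurd rfl hCne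
          | cons a l => simp
        omega
      · -- color m+1 : only v0
        have hall : ∀ u ∈ vs, u = v0 := by
          intro u hu
          obtain ⟨hvS, hvc⟩ := hsub u hu
          simp only [Set.mem_setOf_eq] at hvc
          by_cases h1 : u = v0
          · exact h1
          · exfalso
            by_cases h2 : u ∈ C0
            · rw [hc] at hvc; simp [h1, h2, Fin.ext_iff] at hvc; omega
            · rw [hc] at hvc
              simp only [h1, h2, if_false] at hvc
              have : (c' u).val = i.val := by rw [← hvc]; rfl
              have := (c' u).isLt
              omega
        have hvs := eq_singleton_of_all_eq hcyc.1 hcyc.2.1 hall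
        rw [hvs] at hcyc hunb
        exact hnl v0 (hC0.2.2 v0 hv0mem) (loop_of_dicycle hcyc) hunb
  calc mu D Z1 Z2 S ≤ m + 2 := by rw [mu_def]; exact Nat.sInf_le hcol
    _ = _ := rfl

lemma key [Fintype V] (D : V → V → Prop) (Z1 Z2 : Set (V × V)) :
    ∀ t : ℕ, ∀ S : Set V, 2 * (t + 1) ≤ mu D Z1 Z2 S →
    ∃ C : Fin (t + 1) → List V,
      (∀ i, IsDicycle D (C i) ∧ Unbalanced Z1 Z2 (C i) ∧ ∀ v ∈ C i, v ∈ S) ∧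
      ∀ i j, i ≠ j → ∀ v ∈ C i, v ∉ C j := by
  intro t
  induction t with
  | zero =>
    intro S hS
    obtain ⟨vs, hvs⟩ := exists_unb_cycle (show 2 ≤ mu D Z1 Z2 S by omega)
    exact ⟨fun _ => vs, fun i => ⟨hvs.1, hvs.2.1, hvs.2.2⟩,
      fun i j hij => absurd (by haveI : Subsingleton (Fin (0+1)) := Fin.subsingleton_one; exact Subsingleton.elim i j) hij⟩
  | succ t ih =>
    intro S hS
    have hnl : ∀ v ∈ S, D v v → ¬ Unbalanced Z1 Z2 [v] := no_unb_loop (show 1 ≤ mu D Z1 Z2 S by omega)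
    obtain ⟨C0, hC0, hmin⟩ := exists_min_unb_cycle (exists_unb_cycle (show 2 ≤ mu D Z1 Z2 S by omega))
    set S' := S \ {v | v ∈ C0} with hS'
    have hstep := mu_le_step hnl hC0 hmin
    have hS'mu : 2 * (t + 1) ≤ mu D Z1 Z2 S' := by rw [hS']; omega
    obtain ⟨C', hC'1, hC'2⟩ := ih S' hS'mu
    refine ⟨Fin.cons C0 C', ?_, ?_⟩
    · intro i
      refine Fin.cases ?_ ?_ i
      · simpa using ⟨hC0.1, hC0.2.1, hC0.2.2⟩
      · intro j
        simpa using ⟨(hC'1 j).1, (hC'1 j).2.1, fun v hv => ((hC'1 j).2.2 v hv).1⟩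
    · intro i j
      refine Fin.cases ?_ ?_ i <;> [skip; intro i'] <;>
        (refine Fin.cases ?_ ?_ j <;> [skip; intro j'])
      · intro h; exact absurd rfl h
      · intro _ v hv hv'
        simp only [Fin.cons_zero, Fin.cons_succ] at hv hv'
        exact ((hC'1 j').2.2 v hv').2 hv
      · intro _ v hv
        simp only [Fin.cons_zero, Fin.cons_succ] at hv ⊢
        exact ((hC'1 i').2.2 v hv).2
      · intro h v hv
        simp only [Fin.cons_succ] at hv ⊢
        exact hC'2 i' j' (fun e => h (congrArg Fin.succ e)) v hv

/-- If `μ(D,Z₁,Z₂) ≥ 2t` then `D` contains `t` pairwise vertex-disjoint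
`(Z₁,Z₂)`-unbalanced directed cycles. -/
theorem stmt5 [Fintype V] (t : ℕ) (ht : 1 ≤ t) (D : V → V → Prop) (Z1 Z2 : Set (V × V))
    (hmu : 2 * t ≤ mu D Z1 Z2 Set.univ) :
    ∃ C : Fin t → List V,
      (∀ i, IsDicycle D (C i) ∧ Unbalanced Z1 Z2 (C i)) ∧
      ∀ i j, i ≠ j → ∀ v ∈ C i, v ∉ C j := by
  classical
  obtain ⟨s, rfl⟩ : ∃ s, t = s + 1 := ⟨t - 1, by omega⟩
  obtain ⟨C, h1, h2⟩ := key D Z1 Z2 s Set.univ hmu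
  exact ⟨C, fun i => ⟨(h1 i).1, (h1 i).2.1⟩, h2⟩
end

section
/- Let D be a strongly connected digraph and Z₁, Z₂ ⊆ A(D) with μ(D,Z₁,Z₂) ≥ 8. Then there exists a set X ⊆ V(D) of vertices such that: (i) D[X] is strongly connected, (ii) μ(D[X],Z₁,Z₂) ≥ μ(D,Z₁,Z₂)/4, and (iii) for every pair (x,y) of distinct vertices in X there is a directed X-path in D from x to y. -/
variable {V : Type}

-- ==================== auxiliary development ====================

/-- `c` is a good coloring of `D[T]`. -/
def Good (D : V → V → Prop) (Z1 Z2 : Set (V × V)) (T : Set V) {k : ℕ} (c : V → Fin k) : Prop :=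
  ∀ i : Fin k, NoUnbCycle D Z1 Z2 (T ∩ {v | c v = i})

lemma mu_eq (D : V → V → Prop) (Z1 Z2 : Set (V × V)) (T : Set V) :
    mu D Z1 Z2 T = sInf {k | ∃ c : V → Fin k, Good D Z1 Z2 T c} := rfl

lemma noUnb_mono {D : V → V → Prop} {Z1 Z2 : Set (V × V)} {S T : Set V} (h : S ⊆ T)
    (hT : NoUnbCycle D Z1 Z2 T) : NoUnbCycle D Z1 Z2 S :=
  fun vs hc hm => hT vs hc fun v hv => h (hm v hv)

lemma mu_le_of_good {D : V → V → Prop} {Z1 Z2 : Set (V × V)} {T : Set V} {k : ℕ} {c : V → Fin k}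
    (h : Good D Z1 Z2 T c) : mu D Z1 Z2 T ≤ k := Nat.sInf_le ⟨c, h⟩

lemma mu_mem {D : V → V → Prop} {Z1 Z2 : Set (V × V)} (T : Set V)
    (hset : {k | ∃ c : V → Fin k, Good D Z1 Z2 T c}.Nonempty) :
    ∃ c : V → Fin (mu D Z1 Z2 T), Good D Z1 Z2 T c := Nat.sInf_mem hset

lemma good_pad {D : V → V → Prop} {Z1 Z2 : Set (V × V)} {T : Set V} {m k : ℕ} (hmk : m ≤ k)
    {c : V → Fin m} (h : Good D Z1 Z2 T c) : ∃ c' : V → Fin k, Good D Z1 Z2 T c' := by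
  refine ⟨fun v => Fin.castLE hmk (c v), fun i vs hc hm hunb => ?_⟩
  obtain ⟨v0, hv0⟩ := List.exists_mem_of_ne_nil vs hc.1
  have he0 : Fin.castLE hmk (c v0) = i := (hm v0 hv0).2
  have h0 : ((c v0 : Fin m) : ℕ) = (i : ℕ) := congrArg Fin.val he0
  have hlt : (i : ℕ) < m := h0 ▸ (c v0).isLt
  refine h ⟨(i : ℕ), hlt⟩ vs hc (fun v hv => ⟨(hm v hv).1, ?_⟩) hunb
  have hev : Fin.castLE hmk (c v) = i := (hm v hv).2
  have hv2 : ((c v : Fin m) : ℕ) = (i : ℕ) := congrArg Fin.val hev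
  exact Fin.val_injective hv2

lemma cand_nonempty {D : V → V → Prop} {Z1 Z2 : Set (V × V)}
    (hglob : {k | ∃ c : V → Fin k, Good D Z1 Z2 Set.univ c}.Nonempty) (T : Set V) :
    {k | ∃ c : V → Fin k, Good D Z1 Z2 T c}.Nonempty := by
  obtain ⟨k, c, hc⟩ := hglob
  exact ⟨k, c, fun i => noUnb_mono (Set.inter_subset_inter_left _ (Set.subset_univ T)) (hc i)⟩

lemma mu_pos {D : V → V → Prop} {Z1 Z2 : Set (V × V)} [Nonempty V] {T : Set V}
    (h : {k | ∃ c : V → Fin k, Good D Z1 Z2 T c}.Nonempty) : 1 ≤ mu D Z1 Z2 T := by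
  rcases Nat.eq_zero_or_pos (mu D Z1 Z2 T) with h0 | h1
  · obtain ⟨c, -⟩ := mu_mem T h
    rw [h0] at c
    exact (c (Classical.arbitrary V)).elim0
  · exact h1

lemma mu_le_card {D : V → V → Prop} {Z1 Z2 : Set (V × V)} {T : Set V} {α : Type} [Fintype α]
    {c : V → α} (h : ∀ a : α, NoUnbCycle D Z1 Z2 (T ∩ {v | c v = a})) :
    mu D Z1 Z2 T ≤ Fintype.card α := by
  apply Nat.sInf_le
  refine ⟨fun v => Fintype.equivFin α (c v), fun i => ?_⟩
  have he : (T ∩ {v | Fintype.equivFin α (c v) = i})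
      = (T ∩ {v | c v = (Fintype.equivFin α).symm i}) := by
    ext w
    simp [Equiv.apply_eq_iff_eq_symm_apply]
  rw [he]
  exact h _

-- ===== cyclic propagation =====

lemma getElem_idx_congr {l : List V} {a b : ℕ} (h : a = b) {ha : a < l.length} :
    l[a]'ha = l[b]'(h ▸ ha) := by subst h; rfl

lemma cycle_rel {Q : V → V → Prop} (hrefl : ∀ a, Q a a)
    (htrans : ∀ a b c, Q a b → Q b c → Q a c)
    {vs : List V} (hne : vs ≠ []) (harc : ∀ p ∈ cycleArcs vs, Q p.1 p.2) :
    ∀ x ∈ vs, ∀ y ∈ vs, Q x y := by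
  have hn : 0 < vs.length := List.length_pos_iff.2 hne
  have step : ∀ m (hm : m < vs.length),
      Q (vs[m]'hm) (vs[(m+1) % vs.length]'(Nat.mod_lt _ hn)) := by
    intro m hm
    have hz : m < (vs.zip (vs.rotate 1)).length := by
      rw [List.length_zip, List.length_rotate]; omega
    have hmem : (vs.zip (vs.rotate 1))[m]'hz ∈ cycleArcs vs := List.getElem_mem hz
    have h := harc _ hmem
    rw [List.getElem_zip, List.getElem_rotate] at h
    exact h
  have key : ∀ k m (hm : m < vs.length),
      Q (vs[m]'hm) (vs[(m+k) % vs.length]'(Nat.mod_lt _ hn)) := by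
    intro k
    induction k with
    | zero =>
      intro m hm
      have e : (m + 0) % vs.length = m := by rw [Nat.add_zero, Nat.mod_eq_of_lt hm]
      rw [getElem_idx_congr e]
      exact hrefl _
    | succ k ih =>
      intro m hm
      have h1 := ih m hm
      have h2 := step ((m + k) % vs.length) (Nat.mod_lt _ hn)
      have e : ((m + k) % vs.length + 1) % vs.length = (m + (k+1)) % vs.length := by
        rw [Nat.mod_add_mod, Nat.add_assoc]
      rw [getElem_idx_congr e] at h2
      exact htrans _ _ _ h1 h2
  intro x hx y hy
  obtain ⟨a, ha, rfl⟩ := List.getElem_of_mem hx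
  obtain ⟨b, hb, rfl⟩ := List.getElem_of_mem hy
  have e : (a + (vs.length + b - a)) % vs.length = b := by
    have e1 : a + (vs.length + b - a) = vs.length + b := by omega
    rw [e1, Nat.add_mod_left, Nat.mod_eq_of_lt hb]
  have h := key (vs.length + b - a) a ha
  rw [getElem_idx_congr e] at h
  exact h

-- ===== distances =====

def walkLens (E : V → V → Prop) (r v : V) : Set ℕ :=
  {n | ∃ l : List V, List.Chain E r l ∧ (r :: l).getLast (List.cons_ne_nil r l) = v ∧ l.length = n}

noncomputable def dTo (E : V → V → Prop) (r v : V) : ℕ := sInf (walkLens E r v)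

lemma walkLens_nonempty {E : V → V → Prop} {r v : V} (h : Relation.ReflTransGen E r v) :
    (walkLens E r v).Nonempty := by
  obtain ⟨l, hch, hlast⟩ := List.exists_isChain_cons_of_relationReflTransGen h
  exact ⟨l.length, l, hch, hlast, rfl⟩

lemma dTo_mem {E : V → V → Prop} {r v : V} (h : Relation.ReflTransGen E r v) :
    dTo E r v ∈ walkLens E r v := Nat.sInf_mem (walkLens_nonempty h)

lemma dTo_self {E : V → V → Prop} {r : V} : dTo E r r = 0 := by
  have h : 0 ∈ walkLens E r r := ⟨[], List.Chain.nil, rfl, rfl⟩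
  exact Nat.le_zero.1 (Nat.sInf_le h)

lemma eq_of_dTo_eq_zero {E : V → V → Prop} {r v : V} (h : Relation.ReflTransGen E r v)
    (h0 : dTo E r v = 0) : v = r := by
  obtain ⟨l, hch, hlast, hlen⟩ := dTo_mem h
  rw [h0] at hlen
  have hl : l = [] := List.length_eq_zero_iff.1 hlen
  subst hl
  simpa using hlast.symm

lemma dTo_le_arc {E : V → V → Prop} {r u v : V} (hu : Relation.ReflTransGen E r u)
    (h : E u v) : dTo E r v ≤ dTo E r u + 1 := by
  obtain ⟨l, hch, hlast, hlen⟩ := dTo_mem hu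
  apply Nat.sInf_le
  refine ⟨l ++ [v], ?_, ?_, by simp [hlen]⟩
  · have h1 : List.Chain' E (r :: l) := hch
    have h2 : List.Chain' E ((r :: l) ++ [v]) := by
      apply h1.append (List.isChain_singleton v)
      intro a ha b hb
      rw [List.getLast?_eq_getLast (List.cons_ne_nil _ _)] at ha
      simp only [List.head?_cons, Option.mem_def, Option.some_inj] at ha hb
      rw [← hb, ← ha, hlast]
      exact h
    exact h2
  · rw [← Option.some_inj, ← List.getLast?_eq_getLast]
    rw [show (r :: (l ++ [v])) = (r :: l) ++ [v] by simp]
    rw [List.getLast?_append_of_ne_nil _ (by simp)]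
    simp

lemma getLast_cons_take : ∀ (l : List V) (m : ℕ) (hm : m ≤ l.length) (r : V),
    (r :: l.take m).getLast (List.cons_ne_nil _ _)
      = (r :: l)[m]'(by simp; omega)
  | _, 0, _, r => by simp
  | [], m+1, hm, r => by simp at hm
  | a :: l, m+1, hm, r => by
    rw [List.take_succ_cons, List.getLast_cons (List.cons_ne_nil _ _)]
    exact getLast_cons_take l m (by simpa using hm) a

lemma exists_min_chain {E : V → V → Prop} {r v : V} (h : Relation.ReflTransGen E r v) :
    ∃ l : List V, List.Chain E r l ∧ (r :: l).getLast (List.cons_ne_nil r l) = v ∧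
      ∀ w ∈ (r :: l).dropLast, dTo E r w < dTo E r v := by
  obtain ⟨l, hch, hlast, hlen⟩ := dTo_mem h
  refine ⟨l, hch, hlast, fun w hw => ?_⟩
  obtain ⟨m, hm, hgw⟩ := List.getElem_of_mem hw
  have hm' : m < l.length := by simpa using hm
  have hw' : (r :: l)[m]'(by simp; omega) = w := by
    rw [← hgw, List.getElem_dropLast]
  have h1 : dTo E r w ≤ m := by
    apply Nat.sInf_le
    refine ⟨l.take m, ?_, ?_, by simp [Nat.le_of_lt hm']⟩
    · have hcc : List.Chain' E (r :: l) := hch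
      have hc := hcc.take (m+1)
      rw [List.take_succ_cons] at hc
      exact hc
    · rw [getLast_cons_take l m (Nat.le_of_lt hm') r]
      exact hw'
  omega

-- ===== walk to path =====

lemma mem_dropLast_or_getLast {l : List V} (hne : l ≠ []) {w : V} (h : w ∈ l) :
    w ∈ l.dropLast ∨ w = l.getLast hne := by
  conv at h => rw [← List.dropLast_append_getLast hne]
  rcases List.mem_append.1 h with h | h
  · exact Or.inl h
  · right; simpa using h

lemma exists_path_of_walk {E : V → V → Prop} :
    ∀ (n : ℕ) (W : List V), W.length ≤ n → W.Chain' E → W ≠ [] →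
    ∃ P : List V, P.Nodup ∧ P.Chain' E ∧ P ≠ [] ∧ P.head? = W.head? ∧
      P.getLast? = W.getLast? ∧ ∀ w ∈ P, w ∈ W := by
  intro n
  induction n with
  | zero =>
    intro W hlen _ hne
    cases W with
    | nil => exact absurd rfl hne
    | cons a l => simp at hlen
  | succ n ih =>
    intro W hlen hch hne
    cases W with
    | nil => exact absurd rfl hne
    | cons x t =>
      cases t with
      | nil => exact ⟨[x], by simp, List.isChain_singleton x, by simp, rfl, rfl, by simp⟩
      | cons w W' =>
        by_cases hx : x ∈ w :: W'
        · obtain ⟨l1, l2, hsplit⟩ := List.append_of_mem hx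
          have hsuff : (x :: l2) <:+ (x :: w :: W') :=
            ⟨x :: l1, by rw [List.cons_append, ← hsplit]⟩
          have hch2 := hch.suffix hsuff
          have hlen2 : (x :: l2).length ≤ n := by
            have hl := congrArg List.length hsplit
            simp at hl hlen ⊢
            omega
          obtain ⟨P, h1, h2, h3, h4, h5, h6⟩ := ih (x :: l2) hlen2 hch2 (by simp)
          refine ⟨P, h1, h2, h3, by rw [h4]; rfl, ?_, fun u hu => hsuff.subset (h6 u hu)⟩
          rw [h5]
          obtain ⟨s, hs⟩ := hsuff
          rw [← hs, List.getLast?_append_of_ne_nil _ (by simp)]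
        · obtain ⟨P, h1, h2, h3, h4, h5, h6⟩ := ih (w :: W') (by simp at hlen ⊢; omega)
            hch.tail (by simp)
          refine ⟨x :: P, ?_, ?_, by simp, by rfl, ?_, ?_⟩
          · exact List.nodup_cons.2 ⟨fun hxP => hx (h6 x hxP), h1⟩
          · apply List.isChain_cons.2
            refine ⟨?_, h2⟩
            intro y hy
            rw [h4] at hy
            simp only [List.head?_cons, Option.mem_def, Option.some_inj] at hy
            rw [← hy]
            exact (List.isChain_cons_cons.1 hch).1
          · cases P with
            | nil => exact absurd rfl h3
            | cons p P'' =>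
              rw [List.getLast?_cons_cons, h5, List.getLast?_cons_cons]
          · intro u hu
            rcases List.mem_cons.1 hu with rfl | hu
            · exact List.mem_cons_self
            · exact List.mem_cons_of_mem _ (h6 u hu)

-- ===== strong components =====

def sccOf (D : V → V → Prop) (S : Set V) (v : V) : Set V :=
  {w | Relation.ReflTransGen (inducedRel D S) v w ∧ Relation.ReflTransGen (inducedRel D S) w v}

lemma mem_sccOf_self {D : V → V → Prop} {S : Set V} (v : V) : v ∈ sccOf D S v :=
  ⟨Relation.ReflTransGen.refl, Relation.ReflTransGen.refl⟩

lemma sccOf_subset {D : V → V → Prop} {S : Set V} {v : V} (hv : v ∈ S) : sccOf D S v ⊆ S := by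
  intro w hw
  rcases Relation.ReflTransGen.cases_tail hw.1 with heq | ⟨u, -, hrel⟩
  · exact heq ▸ hv
  · exact hrel.2.2

lemma sccOf_eq {D : V → V → Prop} {S : Set V} {u v : V} (h : u ∈ sccOf D S v) :
    sccOf D S u = sccOf D S v := by
  ext w
  exact ⟨fun hw => ⟨h.1.trans hw.1, hw.2.trans h.2⟩, fun hw => ⟨h.2.trans hw.1, hw.2.trans h.1⟩⟩

lemma rtg_in_sccOf {D : V → V → Prop} {S : Set V} {v w : V} (hw : w ∈ sccOf D S v) :
    ∀ {u}, Relation.ReflTransGen (inducedRel D S) u w → u ∈ sccOf D S v →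
      Relation.ReflTransGen (inducedRel D (sccOf D S v)) u w := by
  intro u h
  induction h using Relation.ReflTransGen.head_induction_on with
  | refl => exact fun _ => Relation.ReflTransGen.refl
  | head hrel hrest ih =>
    rename_i a c
    intro hu
    have hc : c ∈ sccOf D S v := ⟨hu.1.trans (Relation.ReflTransGen.single hrel), hrest.trans hw.2⟩
    exact Relation.ReflTransGen.head ⟨hrel.1, hu, hc⟩ (ih hc)

lemma sccOf_sconn (D : V → V → Prop) (S : Set V) (v : V) :
    StronglyConnectedOn D (sccOf D S v) := by
  intro u hu w hw
  exact rtg_in_sccOf hw (hu.2.trans hw.1) hu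

-- ===== component extraction =====

lemma exists_scc_core [Fintype V] [Nonempty V] (D : V → V → Prop) (Z1 Z2 : Set (V × V))
    (hglob : {k | ∃ c : V → Fin k, Good D Z1 Z2 Set.univ c}.Nonempty)
    {S : Set V} (hS : S.Nonempty) :
    ∃ X : Set V, X ⊆ S ∧ StronglyConnectedOn D X ∧ mu D Z1 Z2 S ≤ mu D Z1 Z2 X := by
  classical
  obtain ⟨v₀, hv₀⟩ := hS
  set SF := (Set.toFinite S).toFinset with hSF
  have hmemSF : ∀ v, v ∈ SF ↔ v ∈ S := fun v => (Set.toFinite S).mem_toFinset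
  have hSFne : SF.Nonempty := ⟨v₀, (hmemSF v₀).2 hv₀⟩
  set f : V → ℕ := fun v => mu D Z1 Z2 (sccOf D S v) with hf
  set k := SF.sup f with hk
  have hk1 : 1 ≤ k := by
    have h1 : f v₀ ≤ k := Finset.le_sup ((hmemSF v₀).2 hv₀)
    have h2 : 1 ≤ f v₀ := mu_pos (cand_nonempty hglob _)
    omega
  have hch : ∀ T : Set V, ∃ c : V → Fin k,
      (∃ c' : V → Fin k, Good D Z1 Z2 T c') → Good D Z1 Z2 T c := by
    intro T
    by_cases h : ∃ c' : V → Fin k, Good D Z1 Z2 T c'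
    · exact ⟨h.choose, fun _ => h.choose_spec⟩
    · exact ⟨fun _ => ⟨0, hk1⟩, fun h' => absurd h' h⟩
  choose F hF using hch
  have hgood : Good D Z1 Z2 S (fun v => F (sccOf D S v) v) := by
    intro i vs hcyc hmem
    obtain ⟨v₁, hv₁⟩ := List.exists_mem_of_ne_nil vs hcyc.1
    have hreach : ∀ x ∈ vs, ∀ y ∈ vs, Relation.ReflTransGen (inducedRel D S) x y := by
      apply cycle_rel (fun a => Relation.ReflTransGen.refl)
        (fun a b c h1 h2 => h1.trans h2) hcyc.1
      intro p hp
      obtain ⟨hp1, hp2⟩ := List.of_mem_zip hp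
      exact Relation.ReflTransGen.single
        ⟨hcyc.2.2 p hp, (hmem _ hp1).1, (hmem _ (List.mem_rotate.1 hp2)).1⟩
    have hscc : ∀ w ∈ vs, w ∈ sccOf D S v₁ :=
      fun w hw => ⟨hreach v₁ hv₁ w hw, hreach w hw v₁ hv₁⟩
    have hv₁S : v₁ ∈ S := (hmem v₁ hv₁).1
    have hgood1 : Good D Z1 Z2 (sccOf D S v₁) (F (sccOf D S v₁)) := by
      apply hF
      obtain ⟨c₁, hc₁⟩ := mu_mem (sccOf D S v₁) (cand_nonempty hglob _)
      exact good_pad (Finset.le_sup (f := f) ((hmemSF v₁).2 hv₁S)) hc₁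
    apply hgood1 i vs hcyc
    intro w hw
    refine ⟨hscc w hw, ?_⟩
    have h2 : F (sccOf D S w) w = i := (hmem w hw).2
    rwa [sccOf_eq (hscc w hw)] at h2
  have hle : mu D Z1 Z2 S ≤ k := mu_le_of_good hgood
  obtain ⟨v₂, hv₂S, hv₂⟩ := Finset.exists_mem_eq_sup SF hSFne f
  exact ⟨sccOf D S v₂, sccOf_subset ((hmemSF v₂).1 hv₂S), sccOf_sconn D S v₂,
    by rw [hk, hv₂] at hle; exact hle⟩


lemma exists_xpath_aux {D : V → V → Prop} {r : V}
    (hconnp : ∀ v, Relation.ReflTransGen D r v)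
    (hconnm : ∀ v, Relation.ReflTransGen (flip D) r v)
    {i j : ℕ} (hi : 1 ≤ i) (hj : 1 ≤ j)
    {X : Set V} (hX : ∀ w ∈ X, dTo D r w = i ∧ dTo (flip D) r w = j)
    {x y : V} (hx : x ∈ X) (hy : y ∈ X) (hxy : x ≠ y) :
    ∃ vs : List V, IsXPath D X vs x y := by
  obtain ⟨hx1, hx2⟩ := hX x hx
  obtain ⟨hy1, hy2⟩ := hX y hy
  obtain ⟨l₁, hch₁, hlast₁, hint₁⟩ := exists_min_chain (hconnm x)
  obtain ⟨l₂, hch₂, hlast₂, hint₂⟩ := exists_min_chain (hconnp y)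
  have hyr : y ≠ r := by
    intro h
    rw [h, dTo_self] at hy1
    omega
  have hl₂ne : l₂ ≠ [] := by
    intro h
    subst h
    simp only [List.getLast_singleton] at hlast₂
    exact hyr hlast₂.symm
  set W : List V := (r :: l₁).reverse ++ l₂ with hW
  have hchW : W.Chain' D := by
    apply List.IsChain.append
    · exact List.isChain_reverse.2 (show List.Chain' (flip D) (r :: l₁) from hch₁)
    · exact (show List.Chain' D (r :: l₂) from hch₂).tail
    · intro a ha b hb
      rw [List.getLast?_reverse, List.head?_cons] at ha
      simp only [Option.mem_def, Option.some_inj] at ha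
      subst ha
      cases l₂ with
      | nil => exact absurd rfl hl₂ne
      | cons b' t =>
        simp only [List.head?_cons, Option.mem_def, Option.some_inj] at hb
        subst hb
        exact (List.isChain_cons_cons.1 hch₂).1
  have hheadW : W.head? = some x := by
    rw [hW, List.head?_append_of_ne_nil _ (by simp), List.head?_reverse,
      List.getLast?_eq_getLast (List.cons_ne_nil _ _), hlast₁]
  have hlast₂' : l₂.getLast hl₂ne = y := by
    rw [List.getLast_cons hl₂ne] at hlast₂
    exact hlast₂
  have hlastW : W.getLast? = some y := by
    rw [hW, List.getLast?_append_of_ne_nil _ hl₂ne,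
      List.getLast?_eq_getLast hl₂ne, hlast₂']
  have hWmem : ∀ w ∈ W, w = x ∨ w = y ∨ w ∉ X := by
    intro w hw
    rw [hW, List.mem_append, List.mem_reverse] at hw
    rcases hw with hw | hw
    · rcases mem_dropLast_or_getLast (List.cons_ne_nil r l₁) hw with h | h
      · right; right
        intro hwX
        have hlt := hint₁ w h
        rw [(hX w hwX).2, hx2] at hlt
        omega
      · left; rw [h, hlast₁]
    · rcases mem_dropLast_or_getLast (List.cons_ne_nil r l₂) (List.mem_cons_of_mem r hw)
        with h | h
      · right; right
        intro hwX
        have hlt := hint₂ w h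
        rw [(hX w hwX).1, hy1] at hlt
        omega
      · right; left; rw [h, hlast₂]
  obtain ⟨P, hPnd, hPch, hPne, hPh, hPl, hPsub⟩ :=
    exists_path_of_walk W.length W le_rfl hchW (by rw [hW]; simp)
  rw [hheadW] at hPh
  rw [hlastW] at hPl
  refine ⟨P, ⟨⟨hPnd, hPch⟩, hPh, hPl⟩, hx, hy, hxy, ?_⟩
  intro w hw hwX
  obtain ⟨P', rfl⟩ : ∃ P', P = x :: P' := by
    cases P with
    | nil => exact absurd rfl hPne
    | cons p t =>
      simp only [List.head?_cons, Option.some_inj] at hPh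
      exact ⟨t, by rw [hPh]⟩
  have hw' : w ∈ P'.dropLast := hw
  have hwP' : w ∈ P' := List.dropLast_subset _ hw'
  have hxP' : x ∉ P' := (List.nodup_cons.1 hPnd).1
  have hP'ne : P' ≠ [] := by rintro rfl; simp at hw'
  have hylast : P'.getLast hP'ne = y := by
    rw [List.getLast?_eq_getLast (List.cons_ne_nil _ _), List.getLast_cons hP'ne,
      Option.some_inj] at hPl
    exact hPl
  have hwy : w ≠ y := by
    rintro rfl
    have hnd' := (List.nodup_cons.1 hPnd).2
    have heq := List.dropLast_append_getLast hP'ne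
    rw [hylast] at heq
    rw [← heq, List.nodup_append] at hnd'
    exact hnd'.2.2 w hw' w (List.mem_singleton_self w) rfl
  rcases hWmem w (hPsub w (List.mem_cons_of_mem x hwP')) with h | h | h
  · exact hxP' (h ▸ hwP')
  · exact hwy h
  · exact h hwX


/-- If `D` is strongly connected with `μ(D,Z₁,Z₂) ≥ 8`, there is `X ⊆ V(D)`
with `D[X]` strongly connected, `μ(D[X],Z₁,Z₂) ≥ μ(D,Z₁,Z₂)/4`, and a directed `X`-path
from `x` to `y` for every pair of distinct `x, y ∈ X`. -/
theorem stmt7 [Fintype V] (D : V → V → Prop) (Z1 Z2 : Set (V × V))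
    (hsc : StronglyConnectedOn D Set.univ) (hmu : 8 ≤ mu D Z1 Z2 Set.univ) :
    ∃ X : Set V,
      StronglyConnectedOn D X ∧
      mu D Z1 Z2 Set.univ ≤ 4 * mu D Z1 Z2 X ∧
      ∀ x ∈ X, ∀ y ∈ X, x ≠ y → ∃ vs : List V, IsXPath D X vs x y := by
  classical
  have hVne : Nonempty V := by
    by_contra h
    rw [not_nonempty_iff] at h
    have h0 : mu D Z1 Z2 Set.univ ≤ 0 :=
      Nat.sInf_le ⟨fun v => isEmptyElim v, fun i => isEmptyElim i⟩
    omega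
  have hglob : {k | ∃ c : V → Fin k, Good D Z1 Z2 Set.univ c}.Nonempty := by
    by_contra h
    rw [Set.not_nonempty_iff_eq_empty] at h
    have h0 := mu_eq D Z1 Z2 Set.univ
    rw [h, Nat.sInf_empty] at h0
    omega
  obtain ⟨r⟩ := hVne
  haveI : Nonempty V := ⟨r⟩
  have hconnp : ∀ v, Relation.ReflTransGen D r v := fun v =>
    Relation.ReflTransGen.mono (r := inducedRel D Set.univ) (p := D) (fun a b hab => hab.1) r v (hsc r trivial v trivial)
  have hconnm : ∀ v, Relation.ReflTransGen (flip D) r v := fun v =>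
    Relation.ReflTransGen.swap (r := D) r v
      (Relation.ReflTransGen.mono (r := inducedRel D Set.univ) (p := D) (fun a b hab => hab.1) v r (hsc v trivial r trivial))
  set cellOf : V → Set V :=
    fun v => {w | dTo D r w = dTo D r v ∧ dTo (flip D) r w = dTo (flip D) r v} with hcellOf
  set Kc := (Finset.univ : Finset V).sup (fun v => mu D Z1 Z2 (cellOf v)) with hKc
  have hKc1 : 1 ≤ Kc := by
    have h1 : mu D Z1 Z2 (cellOf r) ≤ Kc :=
      Finset.le_sup (f := fun v => mu D Z1 Z2 (cellOf v)) (Finset.mem_univ r)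
    have h2 : 1 ≤ mu D Z1 Z2 (cellOf r) := mu_pos (cand_nonempty hglob _)
    omega
  have hch : ∀ T : Set V, ∃ c : V → Fin Kc,
      (∃ c' : V → Fin Kc, Good D Z1 Z2 T c') → Good D Z1 Z2 T c := by
    intro T
    by_cases h : ∃ c' : V → Fin Kc, Good D Z1 Z2 T c'
    · exact ⟨h.choose, fun _ => h.choose_spec⟩
    · exact ⟨fun _ => ⟨0, hKc1⟩, fun h' => absurd h' h⟩
  choose F hF using hch
  -- the parity coloring
  have hcol : ∀ a : Fin 2 × Fin 2 × Fin Kc, NoUnbCycle D Z1 Z2 (Set.univ ∩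
      {v | ((⟨dTo D r v % 2, Nat.mod_lt _ two_pos⟩ : Fin 2),
        (⟨dTo (flip D) r v % 2, Nat.mod_lt _ two_pos⟩ : Fin 2), F (cellOf v) v) = a}) := by
    rintro ⟨p, q, t⟩ vs hcyc hmem
    obtain ⟨v₁, hv₁⟩ := List.exists_mem_of_ne_nil vs hcyc.1
    have hpar : ∀ w ∈ vs, dTo D r w % 2 = (p : ℕ) ∧ dTo (flip D) r w % 2 = (q : ℕ)
        ∧ F (cellOf w) w = t := by
      intro w hw
      have h2 : ((⟨dTo D r w % 2, Nat.mod_lt _ two_pos⟩ : Fin 2),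
          (⟨dTo (flip D) r w % 2, Nat.mod_lt _ two_pos⟩ : Fin 2), F (cellOf w) w)
          = (p, q, t) := (hmem w hw).2
      rw [Prod.ext_iff, Prod.ext_iff] at h2
      exact ⟨congrArg Fin.val h2.1, congrArg Fin.val h2.2.1, h2.2.2⟩
    have harcp : ∀ pr ∈ cycleArcs vs, dTo D r pr.2 ≤ dTo D r pr.1 := by
      intro pr hpr
      obtain ⟨h1, h2⟩ := List.of_mem_zip hpr
      have hD : D pr.1 pr.2 := hcyc.2.2 pr hpr
      have hle : dTo D r pr.2 ≤ dTo D r pr.1 + 1 := dTo_le_arc (hconnp pr.1) hD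
      have e1 := (hpar pr.1 h1).1
      have e2 := (hpar pr.2 (List.mem_rotate.1 h2)).1
      omega
    have harcm : ∀ pr ∈ cycleArcs vs, dTo (flip D) r pr.1 ≤ dTo (flip D) r pr.2 := by
      intro pr hpr
      obtain ⟨h1, h2⟩ := List.of_mem_zip hpr
      have hD : D pr.1 pr.2 := hcyc.2.2 pr hpr
      have hle : dTo (flip D) r pr.1 ≤ dTo (flip D) r pr.2 + 1 :=
        dTo_le_arc (hconnm pr.2) hD
      have e1 := (hpar pr.1 h1).2.1
      have e2 := (hpar pr.2 (List.mem_rotate.1 h2)).2.1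
      omega
    have hlpc : ∀ x ∈ vs, ∀ y ∈ vs, dTo D r y ≤ dTo D r x :=
      cycle_rel (Q := fun a b => dTo D r b ≤ dTo D r a) (fun a => le_rfl)
        (fun a b c h1 h2 => le_trans h2 h1) hcyc.1 harcp
    have hlmc : ∀ x ∈ vs, ∀ y ∈ vs, dTo (flip D) r x ≤ dTo (flip D) r y :=
      cycle_rel (Q := fun a b => dTo (flip D) r a ≤ dTo (flip D) r b) (fun a => le_rfl)
        (fun a b c h1 h2 => le_trans h1 h2) hcyc.1 harcm
    have hcellmem : ∀ w ∈ vs, w ∈ cellOf v₁ := fun w hw =>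
      ⟨le_antisymm (hlpc v₁ hv₁ w hw) (hlpc w hw v₁ hv₁),
        le_antisymm (hlmc w hw v₁ hv₁) (hlmc v₁ hv₁ w hw)⟩
    have hcelleq : ∀ w ∈ vs, cellOf w = cellOf v₁ := by
      intro w hw
      obtain ⟨e1, e2⟩ := hcellmem w hw
      rw [hcellOf]
      ext z
      simp only [Set.mem_setOf_eq]
      rw [e1, e2]
    have hgood1 : Good D Z1 Z2 (cellOf v₁) (F (cellOf v₁)) := by
      apply hF
      obtain ⟨c₁, hc₁⟩ := mu_mem (cellOf v₁) (cand_nonempty hglob _)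
      exact good_pad
        (Finset.le_sup (f := fun v => mu D Z1 Z2 (cellOf v)) (Finset.mem_univ v₁)) hc₁
    apply hgood1 t vs hcyc
    intro w hw
    refine ⟨hcellmem w hw, ?_⟩
    have h3 := (hpar w hw).2.2
    rwa [hcelleq w hw] at h3
  have hcard : mu D Z1 Z2 Set.univ ≤ 4 * Kc := by
    have h4 := mu_le_card hcol
    rwa [show Fintype.card (Fin 2 × Fin 2 × Fin Kc) = 4 * Kc by simp; ring] at h4
  obtain ⟨vstar, -, hvstar⟩ := Finset.exists_mem_eq_sup (Finset.univ : Finset V)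
    ⟨r, Finset.mem_univ r⟩ (fun v => mu D Z1 Z2 (cellOf v))
  have hmucell : mu D Z1 Z2 Set.univ ≤ 4 * mu D Z1 Z2 (cellOf vstar) := by
    rw [← hvstar]; exact hcard
  -- vstar ≠ r
  have hvr : vstar ≠ r := by
    intro hvre
    obtain ⟨k0, c0, hc0⟩ := hglob
    have hsub : cellOf vstar ⊆ {w | w = r} := by
      rw [hvre]
      intro w hw
      have h0 : dTo D r w = 0 := by
        have := hw.1
        rwa [dTo_self] at this
      exact eq_of_dTo_eq_zero (hconnp w) h0
    have h1 : mu D Z1 Z2 (cellOf vstar) ≤ 1 := by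
      have h2 := mu_le_card (D := D) (Z1 := Z1) (Z2 := Z2) (T := cellOf vstar)
        (α := Fin 1) (c := fun _ => 0) ?_
      · simpa using h2
      · intro a
        apply noUnb_mono (T := Set.univ ∩ {v | c0 v = c0 r})
        · intro w hw
          have hwr : w = r := hsub hw.1
          exact ⟨trivial, by rw [hwr]; rfl⟩
        · exact hc0 (c0 r)
    omega
  have hi : 1 ≤ dTo D r vstar :=
    Nat.one_le_iff_ne_zero.2 fun h0 => hvr (eq_of_dTo_eq_zero (hconnp vstar) h0)
  have hj : 1 ≤ dTo (flip D) r vstar :=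
    Nat.one_le_iff_ne_zero.2 fun h0 => hvr (eq_of_dTo_eq_zero (hconnm vstar) h0)
  have hcellne : (cellOf vstar).Nonempty := ⟨vstar, rfl, rfl⟩
  obtain ⟨X, hXsub, hXconn, hXmu⟩ := exists_scc_core D Z1 Z2 hglob hcellne
  refine ⟨X, hXconn, ?_, ?_⟩
  · calc mu D Z1 Z2 Set.univ ≤ 4 * mu D Z1 Z2 (cellOf vstar) := hmucell
      _ ≤ 4 * mu D Z1 Z2 X := Nat.mul_le_mul_left 4 hXmu
  · intro x hx y hy hxy
    exact exists_xpath_aux hconnp hconnm hi hj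
      (fun w hw => hXsub hw) hx hy hxy
end
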